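/- A transversal of the finite symmetric difference equivalence relation on Cantor space (a set containing exactly one element of each equivalence class) is not Lebesgue measurable. -/

import Mathlib

open MeasureTheory

/-- A set (of any primcodable type) is computably enumerable. -/
def CE {α : Type*} [Primcodable α] (S : Set α) : Prop :=
  ∃ f : α →. ℕ, Partrec f ∧ S = f.Dom

/-- The `y`-th finite set in a canonical listing of all finite subsets of `ℕ`. -/
def Dfin (y : ℕ) : Set ℕ := ↑(Denumerable.ofNat (Finset ℕ) y)

/-- Application of the enumeration operator with c.e. index set `W` to an oracle `X`. -/
def enumOp (W : Set ℕ) (X : Set ℕ) : Set ℕ :=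
  {x | ∃ y, Nat.pair x y ∈ W ∧ Dfin y ⊆ X}

/-- Enumeration reducibility. -/
def EnumRed (A B : Set ℕ) : Prop := ∃ W : Set ℕ, CE W ∧ A = enumOp W B

/-- Enumeration equivalence. -/
def EnumEquiv (A B : Set ℕ) : Prop := EnumRed A B ∧ EnumRed B A

/-- Application of a hyper-enumeration operator with c.e. index set `W` to an oracle `X`. -/
def henumOp (W : Set ℕ) (X : Set ℕ) : Set ℕ :=
  {x | ∀ f : List ℕ, ∃ n y,
    Nat.pair (Encodable.encode (f.take n)) (Nat.pair x y) ∈ W ∧ Dfin y ⊆ X}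

/-- Hyper-enumeration reducibility. -/
def HypEnumRed (B A : Set ℕ) : Prop := ∃ W : Set ℕ, CE W ∧ B = henumOp W A

def Cototal (A : Set ℕ) : Prop := EnumRed A Aᶜ

def HypCototal (A : Set ℕ) : Prop := HypEnumRed A Aᶜ

def UnifIntroenum (X : Set ℕ) : Prop :=
  X.Infinite ∧ ∃ W : Set ℕ, CE W ∧ ∀ Y ⊆ X, Y.Infinite → enumOp W Y = X

def Introenum (X : Set ℕ) : Prop :=
  X.Infinite ∧ ∀ Y ⊆ X, Y.Infinite → ∃ W : Set ℕ, CE W ∧ enumOp W Y = X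

/-- View a point of Cantor space as a subset of `ℕ`. -/
def toSet (A : ℕ → Bool) : Set ℕ := {n | A n = true}

/-- Remove `n` from (the set coded by) `A`. -/
def drop (A : ℕ → Bool) (n : ℕ) : ℕ → Bool := fun m => if m = n then false else A m

/-- `A` is `Ψ`-autoreducible. -/
def AutoRed (Ψ : ℕ → (ℕ → Bool) → Bool) (A : ℕ → Bool) : Prop :=
  ∀ n, A n = Ψ n (drop A n)

/-- The basic clopen cylinder of a finite binary string. -/
def cyl (σ : List Bool) : Set (ℕ → Bool) := {A | ∀ i : Fin σ.length, A i = σ.get i}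

/-- `μ` is the uniform (fair-coin) measure on Cantor space: it gives each cylinder
of a string of length `k` measure `2⁻ᵏ`.  (This characterizes the measure uniquely.) -/
def IsCoinMeasure (μ : Measure (ℕ → Bool)) : Prop :=
  ∀ σ : List Bool, μ (cyl σ) = 2⁻¹ ^ σ.length

/-- The first `k` bits of `A`. -/
def res (A : ℕ → Bool) (k : ℕ) : List Bool := List.ofFn fun i : Fin k => A i

/-- A `Π⁰₂` class in Cantor space. -/
def IsPi02 (C : Set (ℕ → Bool)) : Prop :=
  ∃ R : ℕ → List Bool → Bool, Computable (fun p : ℕ × List Bool => R p.1 p.2) ∧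
    C = {A | ∀ m, ∃ k, R m (res A k) = true}

/-- A `Π⁰₃` class in Cantor space. -/
def IsPi03 (C : Set (ℕ → Bool)) : Prop :=
  ∃ R : ℕ → ℕ → List Bool → Bool,
    Computable (fun p : ℕ × ℕ × List Bool => R p.1 p.2.1 p.2.2) ∧
    C = {A | ∀ m, ∃ k, ∀ j, R m k (res A j) = true}

/-- The `m`-th level of the open test determined by the c.e. set `W` of pairs. -/
def testSet (W : Set (ℕ × List Bool)) (m : ℕ) : Set (ℕ → Bool) :=
  ⋃ σ ∈ {σ | (m, σ) ∈ W}, cyl σ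

/-- Martin-Löf randomness (with respect to a measure `μ` on Cantor space). -/
def MLRandom (μ : Measure (ℕ → Bool)) (A : ℕ → Bool) : Prop :=
  ∀ W : Set (ℕ × List Bool), CE W →
    (∀ m, μ (testSet W m) ≤ 2⁻¹ ^ m) → ∃ m, A ∉ testSet W m

/-- 2-randomness: passing all uniformly `Σ⁰₂` tests. -/
def TwoRandom (μ : Measure (ℕ → Bool)) (A : ℕ → Bool) : Prop :=
  ∀ R : ℕ → ℕ → List Bool → Bool,
    Computable (fun p : ℕ × ℕ × List Bool => R p.1 p.2.1 p.2.2) →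
    (∀ m, μ {A | ∃ k, ∀ j, R m k (res A j) = true} ≤ 2⁻¹ ^ m) →
    ∃ m, A ∉ {A | ∃ k, ∀ j, R m k (res A j) = true}

/-- Weak 2-randomness: avoiding every null `Π⁰₂` class. -/
def Weak2Random (μ : Measure (ℕ → Bool)) (A : ℕ → Bool) : Prop :=
  ∀ C : Set (ℕ → Bool), IsPi02 C → μ C = 0 → A ∉ C

/-- Weak 3-randomness: avoiding every null `Π⁰₃` class. -/
def Weak3Random (μ : Measure (ℕ → Bool)) (A : ℕ → Bool) : Prop :=
  ∀ C : Set (ℕ → Bool), IsPi03 C → μ C = 0 → A ∉ C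

/-! Flipping the bits in a finite set `F` preserves the coin measure (it permutes the cylinders
of each length), and these countably many flips carry a transversal `S` onto pairwise disjoint
sets covering Cantor space. If `S` were measurable, `1` would be a countable sum of copies of
`μ S`, which is `0` or `∞`. -/

open Set Function
open scoped symmDiff

lemma not_nullMeasurableSet_of_preimages_partition {α ι : Type*} [MeasurableSpace α]
    [Countable ι] [Infinite ι] {μ : Measure α} [IsFiniteMeasure μ] [NeZero μ] {S : Set α}
    (f : ι → α → α) (hf : ∀ i, MeasurePreserving (f i) μ μ)
    (hcover : ⋃ i, f i ⁻¹' S = univ)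
    (hdisj : Pairwise (Disjoint on fun i => f i ⁻¹' S)) : ¬ NullMeasurableSet S μ := by
  intro hS
  have hsum : μ univ = ∑' _ : ι, μ S := by
    rw [← hcover, measure_iUnion₀ (hdisj.mono fun _ _ h => h.aedisjoint)
      fun i => hS.preimage (hf i).quasiMeasurePreserving]
    exact tsum_congr fun i => (hf i).measure_preimage hS
  rcases eq_or_ne (μ S) 0 with h | h
  · simp only [h, tsum_zero, Measure.measure_univ_eq_zero] at hsum
    exact NeZero.ne μ hsum
  · rw [ENNReal.tsum_const_eq_top_of_ne_zero h] at hsum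
    exact measure_ne_top μ univ hsum

lemma mem_cyl_iff {A : ℕ → Bool} {σ : List Bool} :
    A ∈ cyl σ ↔ ∀ i (h : i < σ.length), A i = σ[i] :=
  ⟨fun H i h => H ⟨i, h⟩, fun H i => H i i.2⟩

lemma mem_cyl_res (A : ℕ → Bool) (k : ℕ) : A ∈ cyl (res A k) :=
  mem_cyl_iff.2 fun i h => by simp [res]

lemma cyl_subset_cyl {σ τ : List Bool} (hlen : σ.length ≤ τ.length)
    (hne : (cyl σ ∩ cyl τ).Nonempty) : cyl τ ⊆ cyl σ := by
  obtain ⟨B, hBσ, hBτ⟩ := hne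
  refine fun A hA => mem_cyl_iff.2 fun i hi => ?_
  have hi' : i < τ.length := hi.trans_le hlen
  rw [mem_cyl_iff.1 hA i hi', ← mem_cyl_iff.1 hBτ i hi', mem_cyl_iff.1 hBσ i hi]

lemma isPiSystem_cyl : IsPiSystem (range cyl) := by
  rintro _ ⟨σ, rfl⟩ _ ⟨τ, rfl⟩ hne
  rcases le_total σ.length τ.length with h | h
  · exact ⟨τ, (inter_eq_right.2 (cyl_subset_cyl h hne)).symm⟩
  · exact ⟨σ, (inter_eq_left.2 (cyl_subset_cyl h (inter_comm _ _ ▸ hne))).symm⟩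

lemma eval_preimage_eq_iUnion_cyl (i : ℕ) (s : Set Bool) :
    (fun A : ℕ → Bool => A i) ⁻¹' s =
      ⋃ σ ∈ {σ : List Bool | ∃ h : i < σ.length, σ[i] ∈ s}, cyl σ := by
  ext A
  simp only [mem_preimage, mem_iUnion, exists_prop]
  constructor
  · refine fun hA => ⟨res A (i + 1), ⟨by simp [res], ?_⟩, mem_cyl_res A _⟩
    simpa only [res, List.getElem_ofFn] using hA
  · rintro ⟨σ, ⟨hi, hσ⟩, hA⟩
    rwa [mem_cyl_iff.1 hA i hi]

lemma measurableSet_cyl (σ : List Bool) : MeasurableSet (cyl σ) := by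
  simp only [cyl, ofPred_forall]
  exact .iInter fun i => measurableSet_eq_fun (measurable_pi_apply _) measurable_const

lemma generateFrom_cyl : MeasurableSpace.generateFrom (range cyl) = MeasurableSpace.pi := by
  refine le_antisymm (MeasurableSpace.generateFrom_le ?_) ?_
  · rintro _ ⟨σ, rfl⟩
    exact measurableSet_cyl σ
  · rw [MeasurableSpace.pi_eq_generateFrom_projections]
    refine MeasurableSpace.generateFrom_le ?_
    rintro _ ⟨i, s, -, rfl⟩
    rw [eval_preimage_eq_iUnion_cyl]
    exact .biUnion (to_countable _) fun σ _ =>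
      MeasurableSpace.measurableSet_generateFrom ⟨σ, rfl⟩

lemma measurable_symmDiff_left (c : ℕ → Bool) : Measurable fun A : ℕ → Bool => c ∆ A :=
  measurable_pi_lambda _ fun n =>
    (measurable_of_countable (c n ∆ ·)).comp (measurable_pi_apply n)

lemma preimage_symmDiff_cyl (c : ℕ → Bool) (σ : List Bool) :
    (c ∆ ·) ⁻¹' cyl σ = cyl (List.ofFn fun i : Fin σ.length => c i ∆ σ.get i) := by
  ext A
  simp only [mem_preimage, mem_cyl_iff, List.length_ofFn, List.getElem_ofFn, Pi.symmDiff_apply,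
    List.get_eq_getElem]
  exact forall₂_congr fun i _ => (symmDiff_right_involutive (c i)).eq_iff

lemma IsCoinMeasure.isProbabilityMeasure {μ : Measure (ℕ → Bool)} (hμ : IsCoinMeasure μ) :
    IsProbabilityMeasure μ :=
  ⟨by simpa [cyl] using hμ []⟩

lemma IsCoinMeasure.measurePreserving_symmDiff_left {μ : Measure (ℕ → Bool)}
    (hμ : IsCoinMeasure μ) (c : ℕ → Bool) : MeasurePreserving (c ∆ ·) μ μ := by
  have := hμ.isProbabilityMeasure
  refine ⟨measurable_symmDiff_left c, ext_of_generate_finite _ generateFrom_cyl.symm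
    isPiSystem_cyl ?_ (by simp [Measure.map_apply (measurable_symmDiff_left c)])⟩
  rintro _ ⟨σ, rfl⟩
  rw [Measure.map_apply (measurable_symmDiff_left c) (measurableSet_cyl σ),
    preimage_symmDiff_cyl, hμ, hμ, List.length_ofFn]

section BoolIndicator

variable {α : Type*}

lemma Set.boolIndicator_injective : Injective (Set.boolIndicator : Set α → α → Bool) :=
  fun s t h => by rw [← s.preimage_boolIndicator_true, h, t.preimage_boolIndicator_true]

lemma setOf_ne_boolIndicator_symmDiff (s : Set α) (A : α → Bool) :
    {n | A n ≠ (s.boolIndicator ∆ A) n} = s := by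
  ext n
  by_cases hn : n ∈ s <;> simp [Set.boolIndicator, hn]

lemma boolIndicator_setOf_ne_symmDiff (A B : α → Bool) :
    {n | A n ≠ B n}.boolIndicator ∆ A = B :=
  funext fun n => by by_cases h : A n = B n <;> simp [Set.boolIndicator, h, Bool.eq_not_iff]

end BoolIndicator

section Transversal

variable {S : Set (ℕ → Bool)}

lemma iUnion_preimage_symmDiff_boolIndicator
    (htrans : ∀ A : ℕ → Bool, ∃ B ∈ S, {n | A n ≠ B n}.Finite) :
    ⋃ F : Finset ℕ, ((F : Set ℕ).boolIndicator ∆ ·) ⁻¹' S = univ := by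
  refine eq_univ_of_forall fun A => ?_
  obtain ⟨B, hBS, hfin⟩ := htrans A
  refine mem_iUnion.2 ⟨hfin.toFinset, ?_⟩
  rwa [mem_preimage, hfin.coe_toFinset, boolIndicator_setOf_ne_symmDiff]

lemma pairwise_disjoint_preimage_symmDiff_boolIndicator
    (htrans : ∀ A : ℕ → Bool, ∃! B, B ∈ S ∧ {n | A n ≠ B n}.Finite) :
    Pairwise (Disjoint on fun F : Finset ℕ => ((F : Set ℕ).boolIndicator ∆ ·) ⁻¹' S) := by
  refine fun F G hFG => disjoint_left.2 fun A hF hG => hFG ?_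
  have hclass (F : Finset ℕ) : {n | A n ≠ ((F : Set ℕ).boolIndicator ∆ A) n}.Finite := by
    rw [setOf_ne_boolIndicator_symmDiff]; exact F.finite_toSet
  exact Finset.coe_injective <| Set.boolIndicator_injective <|
    symmDiff_left_injective A ((htrans A).unique ⟨hF, hclass F⟩ ⟨hG, hclass G⟩)

end Transversal

/-- A transversal of the finite symmetric difference equivalence relation on Cantor
space is not Lebesgue measurable. -/
theorem stmt_3 (μ : Measure (ℕ → Bool)) (hμ : IsCoinMeasure μ)
    (S : Set (ℕ → Bool))
    (htrans : ∀ A : ℕ → Bool, ∃! B, B ∈ S ∧ {n | A n ≠ B n}.Finite) :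
    ¬ NullMeasurableSet S μ := by
  have := hμ.isProbabilityMeasure
  exact not_nullMeasurableSet_of_preimages_partition
    (fun (F : Finset ℕ) A => (F : Set ℕ).boolIndicator ∆ A)
    (fun F => hμ.measurePreserving_symmDiff_left _)
    (iUnion_preimage_symmDiff_boolIndicator fun A => (htrans A).exists)
    (pairwise_disjoint_preimage_symmDiff_boolIndicator htrans)
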